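/- arXiv:2104.06021 — 6 statements merged into one kernel-verified Lean document; each statement's English description precedes it below -/
import Mathlib

section
/- Any acausal subset Λ of the universal Einstein space Ẽin_{1,n-1} ≅ S^{n-1} × ℝ is contained in an affine domain, i.e. there exists t_0 ∈ ℝ such that Λ ⊆ S^{n-1} × (t_0, t_0 + π). -/
/-- The geodesic (angular) distance between two points of the unit sphere of a Euclidean space. -/
noncomputable def sphereDist {n : ℕ} (x y : EuclideanSpace ℝ (Fin n)) : ℝ :=
  Real.arccos (inner ℝ x y)

/-!
On the unit sphere `sphereDist` is the angle between vectors, so the argument runs with angles in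
any real inner product space. Let `m` be the infimum of the times of `Λ`; acausality forces all times into `[m, m + π]`.
Suppose a point `q` of `Λ` sits at the top time `m + π`. Acausality with `q` pushes every other
point `p` to within angle `p.2 - m` of the antipode `-q.1`. Fix one such `p₀` with a definite
margin `δ`; a point `p₁` with time below `m + δ / 2` is then too close to `p₀` in angle for
acausality, by the triangle inequality through `-q.1`. So the top time is not attained, and by
time reversal neither is the bottom one, which leaves room for an open interval of length `π`.
-/

open Real Set InnerProductGeometry

lemma exists_subset_Ioo_of_forall_sub_le {T : Set ℝ} {c : ℝ}
    (hwidth : ∀ s ∈ T, ∀ t ∈ T, t - s ≤ c)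
    (hglb : ∀ m, IsGLB T m → m + c ∉ T) (hlub : ∀ M, IsLUB T M → M - c ∉ T) :
    ∃ t₀, T ⊆ Ioo t₀ (t₀ + c) := by
  rcases T.eq_empty_or_nonempty with rfl | ⟨s, hs⟩
  · exact ⟨0, empty_subset _⟩
  obtain ⟨m, hm⟩ := Real.exists_isGLB ⟨s, hs⟩ ⟨s - c, fun t ht => by linarith [hwidth t ht s hs]⟩
  obtain ⟨M, hM⟩ := Real.exists_isLUB ⟨s, hs⟩ ⟨s + c, fun t ht => by linarith [hwidth s hs t ht]⟩
  have hMm : M ≤ m + c := hM.2 fun t ht => by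
    linarith [hm.2 fun u hu => (by linarith [hwidth u hu t ht] : t - c ≤ u)]
  rcases hMm.lt_or_eq with hlt | heq
  · exact ⟨(m + M - c) / 2, fun t ht => ⟨by linarith [hm.1 ht], by linarith [hM.1 ht]⟩⟩
  · refine ⟨m, fun t ht => ⟨(hm.1 ht).lt_of_ne ?_, heq ▸ (hM.1 ht).lt_of_ne ?_⟩⟩
    · rintro rfl
      exact hlub M hM (by rwa [heq, add_sub_cancel_right])
    · rintro rfl
      exact hglb m hm (heq ▸ ht)

lemma sphereDist_eq_angle {n : ℕ} {x y : EuclideanSpace ℝ (Fin n)} (hx : ‖x‖ = 1)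
    (hy : ‖y‖ = 1) : sphereDist x y = angle x y := by
  rw [sphereDist, angle, hx, hy, mul_one, div_one]

variable {V : Type*} [NormedAddCommGroup V] [InnerProductSpace ℝ V]

def IsAcausal (Λ : Set (V × ℝ)) : Prop :=
  Λ.Pairwise fun p q => |p.2 - q.2| < angle p.1 q.1

namespace IsAcausal

variable {Λ : Set (V × ℝ)}

lemma snd_sub_le_pi (hΛ : IsAcausal Λ) {p q : V × ℝ} (hp : p ∈ Λ) (hq : q ∈ Λ) :
    p.2 - q.2 ≤ π := by
  rcases eq_or_ne p q with rfl | hpq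
  · simpa using pi_pos.le
  · linarith [le_abs_self (p.2 - q.2), hΛ hp hq hpq, angle_le_pi p.1 q.1]

lemma preimage_timeReversal (hΛ : IsAcausal Λ) :
    IsAcausal ((fun p : V × ℝ => (p.1, -p.2)) ⁻¹' Λ) := by
  intro p hp q hq hpq
  have hne : ((p.1, -p.2) : V × ℝ) ≠ (q.1, -q.2) := fun h =>
    hpq (Prod.ext_iff.mpr (by simpa using h))
  have := hΛ hp hq hne
  dsimp only at this
  rwa [neg_sub_neg, abs_sub_comm] at this

lemma snd_ne_add_pi_of_isGLB (hΛ : IsAcausal Λ) {q : V × ℝ} (hq : q ∈ Λ) {m : ℝ}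
    (hm : IsGLB (Prod.snd '' Λ) m) : q.2 ≠ m + π := by
  intro hqm
  have hnear_antipode : ∀ p ∈ Λ, p ≠ q → angle p.1 (-q.1) < p.2 - m := by
    intro p hp hpq
    rw [angle_neg_right]
    linarith [neg_abs_le (p.2 - q.2), hΛ hp hq hpq]
  obtain ⟨-, ⟨p₀, hp₀, rfl⟩, -, hp₀q⟩ := hm.exists_between (lt_add_of_pos_right m pi_pos)
  set δ := p₀.2 - m - angle p₀.1 (-q.1)
  have hδ : 0 < δ := sub_pos.mpr (hnear_antipode p₀ hp₀ (by rintro rfl; linarith))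
  obtain ⟨-, ⟨p₁, hp₁, rfl⟩, hmp₁, hp₁δ⟩ := hm.exists_between (lt_add_of_pos_right m (half_pos hδ))
  have hp₁p₀ : p₁.2 < p₀.2 := by linarith [angle_nonneg p₀.1 (-q.1)]
  have hp₁_near := hnear_antipode p₁ hp₁ (by rintro rfl; linarith)
  have hp₀p₁ := hΛ hp₀ hp₁ (by rintro rfl; exact hp₁p₀.false)
  have htriangle := angle_le_angle_add_angle p₀.1 (-q.1) p₁.1
  rw [angle_comm (-q.1)] at htriangle
  linarith [le_abs_self (p₀.2 - p₁.2)]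

lemma snd_ne_sub_pi_of_isLUB (hΛ : IsAcausal Λ) {q : V × ℝ} (hq : q ∈ Λ) {M : ℝ}
    (hM : IsLUB (Prod.snd '' Λ) M) : q.2 ≠ M - π := by
  have htimes : Prod.snd '' ((fun p : V × ℝ => (p.1, -p.2)) ⁻¹' Λ) = -(Prod.snd '' Λ) := by
    ext t
    constructor
    · rintro ⟨p, hp, rfl⟩
      exact ⟨_, hp, rfl⟩
    · rintro ⟨p, hp, hpt⟩
      exact ⟨(p.1, -p.2), by simpa using hp, by simp [hpt]⟩
  intro hqM
  refine hΛ.preimage_timeReversal.snd_ne_add_pi_of_isGLB (q := (q.1, -q.2)) (by simpa using hq)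
    (htimes ▸ hM.neg) ?_
  show -q.2 = -M + π
  rw [hqM]
  ring

end IsAcausal

/-- Any acausal subset `Λ` of the universal Einstein space
`Ẽin_{1,n-1} ≅ S^{n-1} × ℝ` (acausal: any two distinct points `(x,t), (x',t')` of `Λ`
satisfy `d₀(x,x') > |t - t'|`) is contained in an affine domain, i.e. there is `t₀ ∈ ℝ`
with `Λ ⊆ S^{n-1} × (t₀, t₀ + π)`. -/
theorem stmt_3 {n : ℕ} (Λ : Set (EuclideanSpace ℝ (Fin n) × ℝ))
    (hsphere : ∀ p ∈ Λ, ‖p.1‖ = 1)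
    (hac : ∀ p ∈ Λ, ∀ q ∈ Λ, p ≠ q → |p.2 - q.2| < sphereDist p.1 q.1) :
    ∃ t₀ : ℝ, ∀ p ∈ Λ, t₀ < p.2 ∧ p.2 < t₀ + Real.pi := by
  have hΛ : IsAcausal Λ := by
    intro p hp q hq hpq
    rw [← sphereDist_eq_angle (hsphere p hp) (hsphere q hq)]
    exact hac p hp q hq hpq
  obtain ⟨t₀, ht₀⟩ := exists_subset_Ioo_of_forall_sub_le (T := Prod.snd '' Λ) (c := π)
    (by rintro _ ⟨q, hq, rfl⟩ _ ⟨p, hp, rfl⟩; exact hΛ.snd_sub_le_pi hp hq)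
    (by rintro m hm ⟨q, hq, hqm⟩; exact hΛ.snd_ne_add_pi_of_isGLB hq hm hqm)
    (by rintro M hM ⟨q, hq, hqM⟩; exact hΛ.snd_ne_sub_pi_of_isLUB hq hM hqM)
  exact ⟨t₀, fun p hp => ht₀ ⟨p, hp, rfl⟩⟩
end

section
/- For every point q of real projective space ℙ(ℝ^{n+2}) and every 2-plane P ∈ Gr_2(ℝ^{n+2}), the Hausdorff-type distance δ(P, F_q) from P to the set F_q of 2-planes whose projectivization passes through q equals the distance d(q, ℙ(P)) from q to the projective line ℙ(P). -/
/-!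
Choose an orthonormal basis `p, w` of `P` with `w ⊥ q` and `⟪q, p⟫ ≥ 0` (possible because
`P ∩ q^⊥` is nonzero).  Then `⟪q, a • p + b • w⟫ = a ⟪q, p⟫`, so `p` is a point of `ℙ(P)`
nearest to `q` and `d(q, ℙ(P)) = ‖q - p‖`.  The plane `P₀ = span {q, w}` lies in `F_q`, and the
map `a • p + b • w ↦ a • q + b • w` between the unit circles of `P` and `P₀` moves every point by
`|a| ‖q - p‖ ≤ ‖q - p‖`, so `δ(P, P₀) ≤ d(q, ℙ(P))`.  Conversely, for `P' ∈ F_q` the point `q`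
of `ℙ(P')` is already at distance `d(q, ℙ(P))` from `ℙ(P)`, so `δ(P, P') ≥ d(q, ℙ(P))`.
-/

/-- The angle metric on projective space, computed on normalized representatives of lines. -/
noncomputable def projDist {m : ℕ} (x y : EuclideanSpace ℝ (Fin m)) : ℝ :=
  min ‖‖x‖⁻¹ • x - ‖y‖⁻¹ • y‖ ‖‖x‖⁻¹ • x + ‖y‖⁻¹ • y‖

/-- The set of unit vectors of a subspace `P` (representatives of the points of `ℙ(P)`). -/
def unitSet {m : ℕ} (P : Submodule ℝ (EuclideanSpace ℝ (Fin m))) :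
    Set (EuclideanSpace ℝ (Fin m)) :=
  {x | x ∈ P ∧ ‖x‖ = 1}

/-- Distance from a projective point (given by a unit vector `q`) to a set of unit vectors. -/
noncomputable def distToSet {m : ℕ} (q : EuclideanSpace ℝ (Fin m))
    (A : Set (EuclideanSpace ℝ (Fin m))) : ℝ :=
  sInf ((fun x => projDist q x) '' A)

/-- Hausdorff distance between two sets of unit vectors, for the projective metric. -/
noncomputable def hausDist {m : ℕ} (A B : Set (EuclideanSpace ℝ (Fin m))) : ℝ :=
  max (sSup ((fun a => distToSet a B) '' A)) (sSup ((fun b => distToSet b A) '' B))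

/-- The metric `δ` on the Grassmannian `Gr₂(ℝ^m)`: the Hausdorff distance between the
corresponding projective lines. -/
noncomputable def grDist {m : ℕ} (P P' : Submodule ℝ (EuclideanSpace ℝ (Fin m))) : ℝ :=
  hausDist (unitSet P) (unitSet P')

/-- The set `F_q` of 2-planes whose projectivization passes through the point `[q]`. -/
def planesThrough {m : ℕ} (q : EuclideanSpace ℝ (Fin m)) :
    Set (Submodule ℝ (EuclideanSpace ℝ (Fin m))) :=
  {P | Module.finrank ℝ P = 2 ∧ q ∈ P}

open scoped RealInnerProductSpace
open Module Submodule

lemma abs_le_one_of_sq_add_sq_eq_one {a b : ℝ} (hab : a ^ 2 + b ^ 2 = 1) : |a| ≤ 1 :=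
  abs_le.2 ⟨by nlinarith [sq_nonneg b], by nlinarith [sq_nonneg b]⟩

section InnerProductSpace

variable {E : Type*} [NormedAddCommGroup E] [InnerProductSpace ℝ E]

lemma norm_smul_add_smul_sq {e₁ e₂ : E} (h₁ : ‖e₁‖ = 1) (h₂ : ‖e₂‖ = 1) (h₁₂ : ⟪e₁, e₂⟫ = 0)
    (a b : ℝ) : ‖a • e₁ + b • e₂‖ ^ 2 = a ^ 2 + b ^ 2 := by
  have h : ⟪a • e₁, b • e₂⟫ = 0 := by
    rw [real_inner_smul_left, real_inner_smul_right, h₁₂, mul_zero, mul_zero]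
  rw [sq, norm_add_sq_eq_norm_sq_add_norm_sq_real h, norm_smul, norm_smul, h₁, h₂]
  simp [sq]

lemma finrank_span_pair_eq_two {e₁ e₂ : E} (h₁ : ‖e₁‖ = 1) (h₂ : ‖e₂‖ = 1)
    (h₁₂ : ⟪e₁, e₂⟫ = 0) : finrank ℝ (span ℝ {e₁, e₂}) = 2 := by
  have hli : LinearIndependent ℝ ![e₁, e₂] := LinearIndependent.pair_iff.2 fun s t hst => by
    have h := norm_smul_add_smul_sq h₁ h₂ h₁₂ s t
    rw [hst, norm_zero] at h
    constructor <;> nlinarith [sq_nonneg s, sq_nonneg t]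
  rw [← Matrix.range_cons_cons_empty e₁ e₂ ![], finrank_span_eq_card hli, Fintype.card_fin]

lemma exists_unit_mem_inner_eq_zero {P : Submodule ℝ E} (hP : 1 < finrank ℝ P) (q : E) :
    ∃ w ∈ P, ‖w‖ = 1 ∧ ⟪q, w⟫ = 0 := by
  have : FiniteDimensional ℝ P := finite_of_finrank_pos (by omega)
  have hker : LinearMap.ker ((innerSL ℝ q).toLinearMap.domRestrict P) ≠ ⊥ :=
    LinearMap.ker_ne_bot_of_finrank_lt (by rwa [finrank_self])
  obtain ⟨v, hv, hv0⟩ := exists_mem_ne_zero_of_ne_bot hker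
  have hv0' : (v : E) ≠ 0 := by exact_mod_cast hv0
  refine ⟨‖(v : E)‖⁻¹ • (v : E), P.smul_mem _ v.2, norm_smul_inv_norm hv0', ?_⟩
  rw [real_inner_smul_right, show ⟪q, (v : E)⟫ = 0 from hv, mul_zero]

lemma exists_orthonormal_pair_span_eq {P : Submodule ℝ E} (hP : finrank ℝ P = 2) (q : E) :
    ∃ p w : E, ‖p‖ = 1 ∧ ‖w‖ = 1 ∧ ⟪p, w⟫ = 0 ∧ ⟪q, w⟫ = 0 ∧ 0 ≤ ⟪q, p⟫ ∧
      P = span ℝ {p, w} := by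
  have : FiniteDimensional ℝ P := finite_of_finrank_eq_succ hP
  have hP₁ : 1 < finrank ℝ P := by omega
  obtain ⟨w, hwP, hw, hqw⟩ := exists_unit_mem_inner_eq_zero hP₁ q
  obtain ⟨p, hpP, hp, hwp, hqp⟩ : ∃ p ∈ P, ‖p‖ = 1 ∧ ⟪w, p⟫ = 0 ∧ 0 ≤ ⟪q, p⟫ := by
    obtain ⟨p, hpP, hp, hwp⟩ := exists_unit_mem_inner_eq_zero hP₁ w
    rcases le_total 0 ⟪q, p⟫ with hqp | hqp
    · exact ⟨p, hpP, hp, hwp, hqp⟩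
    · refine ⟨-p, P.neg_mem hpP, by rwa [norm_neg], ?_, ?_⟩
      · rw [inner_neg_right, hwp, neg_zero]
      · rw [inner_neg_right]; linarith
  have hpw : ⟪p, w⟫ = 0 := by rwa [real_inner_comm]
  refine ⟨p, w, hp, hw, hpw, hqw, hqp, (eq_of_le_of_finrank_eq ?_ ?_).symm⟩
  · exact span_le.2 (Set.insert_subset_iff.2 ⟨hpP, Set.singleton_subset_iff.2 hwP⟩)
  · rw [finrank_span_pair_eq_two hp hw hpw, hP]

end InnerProductSpace

section ProjectiveDistances

variable {m : ℕ}

lemma projDist_nonneg (x y : EuclideanSpace ℝ (Fin m)) : 0 ≤ projDist x y :=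
  le_min (norm_nonneg _) (norm_nonneg _)

lemma projDist_le_two (x y : EuclideanSpace ℝ (Fin m)) : projDist x y ≤ 2 := by
  have hunit (z : EuclideanSpace ℝ (Fin m)) : ‖‖z‖⁻¹ • z‖ ≤ 1 := by
    rcases eq_or_ne z 0 with rfl | hz
    · simp
    · exact (norm_smul_inv_norm hz).le
  calc projDist x y ≤ ‖‖x‖⁻¹ • x - ‖y‖⁻¹ • y‖ := min_le_left _ _
    _ ≤ ‖‖x‖⁻¹ • x‖ + ‖‖y‖⁻¹ • y‖ := norm_sub_le _ _
    _ ≤ 2 := by linarith [hunit x, hunit y]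

lemma projDist_of_norm_eq_one {x y : EuclideanSpace ℝ (Fin m)} (hx : ‖x‖ = 1) (hy : ‖y‖ = 1) :
    projDist x y = min ‖x - y‖ ‖x + y‖ := by
  simp [projDist, hx, hy]

lemma projDist_le_norm_sub {x y : EuclideanSpace ℝ (Fin m)} (hx : ‖x‖ = 1) (hy : ‖y‖ = 1) :
    projDist x y ≤ ‖x - y‖ :=
  (projDist_of_norm_eq_one hx hy).trans_le (min_le_left _ _)

lemma norm_sub_le_projDist {q x y : EuclideanSpace ℝ (Fin m)} (hq : ‖q‖ = 1) (hx : ‖x‖ = 1)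
    (hy : ‖y‖ = 1) (h : |⟪q, x⟫| ≤ ⟪q, y⟫) : ‖q - y‖ ≤ projDist q x := by
  rw [projDist_of_norm_eq_one hq hx]
  obtain ⟨h₁, h₂⟩ := abs_le.1 h
  refine le_min ?_ ?_ <;>
    rw [← pow_le_pow_iff_left₀ (norm_nonneg _) (norm_nonneg _) two_ne_zero]
  · rw [norm_sub_sq_real, norm_sub_sq_real, hq, hx, hy]; linarith
  · rw [norm_sub_sq_real, norm_add_sq_real, hq, hx, hy]; linarith

lemma distToSet_nonneg (q : EuclideanSpace ℝ (Fin m)) (A : Set (EuclideanSpace ℝ (Fin m))) :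
    0 ≤ distToSet q A :=
  Real.sInf_nonneg (by rintro _ ⟨x, -, rfl⟩; exact projDist_nonneg q x)

lemma distToSet_le_projDist (q : EuclideanSpace ℝ (Fin m))
    {A : Set (EuclideanSpace ℝ (Fin m))} {a : EuclideanSpace ℝ (Fin m)} (ha : a ∈ A) :
    distToSet q A ≤ projDist q a :=
  csInf_le ⟨0, by rintro _ ⟨x, -, rfl⟩; exact projDist_nonneg q x⟩ ⟨a, ha, rfl⟩

lemma le_distToSet {q : EuclideanSpace ℝ (Fin m)} {A : Set (EuclideanSpace ℝ (Fin m))} {r : ℝ}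
    (hA : A.Nonempty) (h : ∀ x ∈ A, r ≤ projDist q x) : r ≤ distToSet q A :=
  le_csInf (hA.image _) (by rintro _ ⟨x, hx, rfl⟩; exact h x hx)

lemma distToSet_le_two (q : EuclideanSpace ℝ (Fin m)) (A : Set (EuclideanSpace ℝ (Fin m))) :
    distToSet q A ≤ 2 := by
  rcases A.eq_empty_or_nonempty with rfl | ⟨a, ha⟩
  · simp [distToSet]
  · exact (distToSet_le_projDist q ha).trans (projDist_le_two q a)

lemma grDist_nonneg (P P' : Submodule ℝ (EuclideanSpace ℝ (Fin m))) : 0 ≤ grDist P P' :=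
  (Real.sSup_nonneg (by rintro _ ⟨x, -, rfl⟩; exact distToSet_nonneg _ _)).trans
    (le_max_left _ _)

lemma grDist_le {P P' : Submodule ℝ (EuclideanSpace ℝ (Fin m))} {r : ℝ} (hr : 0 ≤ r)
    (h : ∀ x ∈ unitSet P, distToSet x (unitSet P') ≤ r)
    (h' : ∀ x ∈ unitSet P', distToSet x (unitSet P) ≤ r) : grDist P P' ≤ r :=
  max_le (Real.sSup_le (by rintro _ ⟨x, hx, rfl⟩; exact h x hx) hr)
    (Real.sSup_le (by rintro _ ⟨x, hx, rfl⟩; exact h' x hx) hr)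

lemma distToSet_le_grDist {P P' : Submodule ℝ (EuclideanSpace ℝ (Fin m))}
    {q : EuclideanSpace ℝ (Fin m)} (hq : q ∈ unitSet P') :
    distToSet q (unitSet P) ≤ grDist P P' :=
  have hbdd : BddAbove ((fun x => distToSet x (unitSet P)) '' unitSet P') :=
    ⟨2, by rintro _ ⟨x, -, rfl⟩; exact distToSet_le_two _ _⟩
  (le_csSup hbdd ⟨q, hq, rfl⟩).trans (le_max_right _ _)

end ProjectiveDistances

section OrthonormalPair

variable {m : ℕ} {e₁ e₂ : EuclideanSpace ℝ (Fin m)}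

lemma mem_unitSet_span_pair (h₁ : ‖e₁‖ = 1) (h₂ : ‖e₂‖ = 1) (h₁₂ : ⟪e₁, e₂⟫ = 0)
    {x : EuclideanSpace ℝ (Fin m)} :
    x ∈ unitSet (span ℝ {e₁, e₂}) ↔ ∃ a b : ℝ, a ^ 2 + b ^ 2 = 1 ∧ x = a • e₁ + b • e₂ := by
  constructor
  · rintro ⟨hx, hx1⟩
    obtain ⟨a, b, rfl⟩ := mem_span_pair.1 hx
    refine ⟨a, b, ?_, rfl⟩
    rw [← norm_smul_add_smul_sq h₁ h₂ h₁₂, hx1, one_pow]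
  · rintro ⟨a, b, hab, rfl⟩
    refine ⟨mem_span_pair.2 ⟨a, b, rfl⟩, ?_⟩
    rw [← pow_eq_one_iff_of_nonneg (norm_nonneg _) two_ne_zero, norm_smul_add_smul_sq h₁ h₂ h₁₂,
      hab]

lemma distToSet_unitSet_span_pair_le {f₁ : EuclideanSpace ℝ (Fin m)} (h₁ : ‖e₁‖ = 1)
    (h₂ : ‖e₂‖ = 1) (h₁₂ : ⟪e₁, e₂⟫ = 0) (hf₁ : ‖f₁‖ = 1) (hf₁₂ : ⟪f₁, e₂⟫ = 0)
    {x : EuclideanSpace ℝ (Fin m)} (hx : x ∈ unitSet (span ℝ {e₁, e₂})) :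
    distToSet x (unitSet (span ℝ {f₁, e₂})) ≤ ‖e₁ - f₁‖ := by
  obtain ⟨a, b, hab, rfl⟩ := (mem_unitSet_span_pair h₁ h₂ h₁₂).1 hx
  have hy : a • f₁ + b • e₂ ∈ unitSet (span ℝ {f₁, e₂}) :=
    (mem_unitSet_span_pair hf₁ h₂ hf₁₂).2 ⟨a, b, hab, rfl⟩
  calc distToSet (a • e₁ + b • e₂) (unitSet (span ℝ {f₁, e₂}))
      ≤ ‖a • e₁ + b • e₂ - (a • f₁ + b • e₂)‖ :=
        (distToSet_le_projDist _ hy).trans (projDist_le_norm_sub hx.2 hy.2)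
    _ = |a| * ‖e₁ - f₁‖ := by rw [add_sub_add_right_eq_sub, ← smul_sub, norm_smul, Real.norm_eq_abs]
    _ ≤ ‖e₁ - f₁‖ := mul_le_of_le_one_left (norm_nonneg _) (abs_le_one_of_sq_add_sq_eq_one hab)

lemma grDist_span_pair_le {f₁ : EuclideanSpace ℝ (Fin m)} (h₁ : ‖e₁‖ = 1) (h₂ : ‖e₂‖ = 1)
    (h₁₂ : ⟪e₁, e₂⟫ = 0) (hf₁ : ‖f₁‖ = 1) (hf₁₂ : ⟪f₁, e₂⟫ = 0) :
    grDist (span ℝ {e₁, e₂}) (span ℝ {f₁, e₂}) ≤ ‖e₁ - f₁‖ :=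
  grDist_le (norm_nonneg _) (fun _ hx => distToSet_unitSet_span_pair_le h₁ h₂ h₁₂ hf₁ hf₁₂ hx)
    fun _ hx => norm_sub_rev f₁ e₁ ▸ distToSet_unitSet_span_pair_le hf₁ h₂ hf₁₂ h₁ h₁₂ hx

lemma distToSet_unitSet_span_pair {q p w : EuclideanSpace ℝ (Fin m)} (hq : ‖q‖ = 1)
    (hp : ‖p‖ = 1) (hw : ‖w‖ = 1) (hpw : ⟪p, w⟫ = 0) (hqw : ⟪q, w⟫ = 0) (hqp : 0 ≤ ⟪q, p⟫) :
    distToSet q (unitSet (span ℝ {p, w})) = ‖q - p‖ := by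
  have hpP : p ∈ unitSet (span ℝ {p, w}) := ⟨subset_span (Set.mem_insert p {w}), hp⟩
  refine le_antisymm ((distToSet_le_projDist q hpP).trans (projDist_le_norm_sub hq hp))
    (le_distToSet ⟨p, hpP⟩ fun x hx => norm_sub_le_projDist hq hx.2 hp ?_)
  obtain ⟨a, b, hab, rfl⟩ := (mem_unitSet_span_pair hp hw hpw).1 hx
  rw [inner_add_right, real_inner_smul_right, real_inner_smul_right, hqw, mul_zero, add_zero,
    abs_mul, abs_of_nonneg hqp]
  exact mul_le_of_le_one_left hqp (abs_le_one_of_sq_add_sq_eq_one hab)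

end OrthonormalPair

/-- For every point `q` of projective space `ℙ(ℝ^{n+2})` (represented by
a unit vector) and every 2-plane `P`, the distance `δ(P, F_q) = inf_{P' ∈ F_q} δ(P,P')`
equals the distance `d(q, ℙ(P))` from `q` to the projective line `ℙ(P)`. -/
theorem stmt_8 (n : ℕ) (q : EuclideanSpace ℝ (Fin (n + 2))) (hq : ‖q‖ = 1)
    (P : Submodule ℝ (EuclideanSpace ℝ (Fin (n + 2)))) (hP : Module.finrank ℝ P = 2) :
    sInf ((fun P' => grDist P P') '' planesThrough q) = distToSet q (unitSet P) := by
  obtain ⟨p, w, hp, hw, hpw, hqw, hqp, rfl⟩ := exists_orthonormal_pair_span_eq hP q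
  have hP₀ : span ℝ {q, w} ∈ planesThrough q :=
    ⟨finrank_span_pair_eq_two hq hw hqw, subset_span (Set.mem_insert q {w})⟩
  have hbdd : BddBelow ((fun P' => grDist (span ℝ {p, w}) P') '' planesThrough q) :=
    ⟨0, by rintro _ ⟨P', -, rfl⟩; exact grDist_nonneg _ _⟩
  refine le_antisymm ?_ (le_csInf ⟨_, _, hP₀, rfl⟩ ?_)
  · calc sInf _ ≤ grDist (span ℝ {p, w}) (span ℝ {q, w}) := csInf_le hbdd ⟨_, hP₀, rfl⟩
      _ ≤ ‖p - q‖ := grDist_span_pair_le hp hw hpw hq hqw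
      _ = distToSet q (unitSet (span ℝ {p, w})) := by
        rw [norm_sub_rev, distToSet_unitSet_span_pair hq hp hw hpw hqw hqp]
  · rintro _ ⟨P', hP', rfl⟩
    exact distToSet_le_grDist ⟨hP'.2, hq⟩
end

section
/- Let G be a group of homeomorphisms of a topological space Ω ⊆ Ein_{1,n} such that every infinite sequence of pairwise distinct elements of G, acting on Ein_{1,n}, has a subsequence converging uniformly on compact subsets of the complement of the lightcone of some point p_- to the constant map p_+, with p_± in a closed G-invariant set Λ disjoint from Ω and with Ω disjoint from all lightcones of points of Λ. Then the G-action on Ω is properly discontinuous: no two points of Ω are dynamically related, i.e., there is no sequence p_i → p in Ω and g_i → ∞ in G with g_i·p_i → q ∈ Ω. -/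
/-- Let `G` be a group acting (by homeomorphisms) on a compact space
`X` (the Einstein universe `Ein_{1,n}`), `L p` the lightcone of a point `p`, `Λ` a closed
`G`-invariant set (the limit set), and `Ω ⊆ X` disjoint from `Λ` and from all lightcones
of points of `Λ`. Assume the `P₁`-divergence dynamics: every sequence of pairwise distinct
elements of `G` has a subsequence converging, uniformly on compact subsets of the
complement of the lightcone of some point `p₋ ∈ Λ`, to the constant map at some `p₊ ∈ Λ`.
Then the `G`-action on `Ω` is properly discontinuous: no two points of `Ω` are
dynamically related, i.e. there are no `p_i → p ∈ Ω` and `g_i → ∞` in `G` with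
`g_i • p_i → q ∈ Ω`. -/
theorem stmt_15 {G X : Type*} [Group G] [TopologicalSpace X] [CompactSpace X] [T2Space X]
    [LocallyCompactSpace X] [MulAction G X]
    (hhomeo : ∀ g : G, Continuous fun x : X => g • x)
    (L : X → Set X) (hLclosed : ∀ p, IsClosed (L p)) (hLself : ∀ p, p ∈ L p)
    (Λ : Set X) (hΛclosed : IsClosed Λ) (hΛinv : ∀ g : G, ∀ p ∈ Λ, g • p ∈ Λ)
    (Ω : Set X) (hΩΛ : Ω ∩ Λ = ∅) (hΩL : ∀ p ∈ Λ, ∀ q ∈ Ω, q ∉ L p)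
    (hdyn : ∀ g : ℕ → G, Function.Injective g →
      ∃ φ : ℕ → ℕ, StrictMono φ ∧ ∃ pp ∈ Λ, ∃ pm ∈ Λ,
        ∀ K : Set X, IsCompact K → K ∩ L pm = ∅ →
          ∀ U ∈ nhds pp, ∀ᶠ k in Filter.atTop, ∀ x ∈ K, g (φ k) • x ∈ U) :
    ∀ p ∈ Ω, ∀ q ∈ Ω, ¬ ∃ (ps : ℕ → X) (g : ℕ → G),
      Filter.Tendsto ps Filter.atTop (nhds p) ∧
      (∀ F : Set G, F.Finite → ∀ᶠ i in Filter.atTop, g i ∉ F) ∧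
      Filter.Tendsto (fun i => g i • ps i) Filter.atTop (nhds q) := by
  classical
  rintro p hp q hq ⟨ps, g, hps, hginf, hconv⟩
  have key : ∀ s : Finset G, ∀ m : ℕ, ∃ i, m ≤ i ∧ g i ∉ (s : Set G) := by
    intro s m
    have h := hginf (s : Set G) s.finite_toSet
    rw [Filter.eventually_atTop] at h
    obtain ⟨a, ha⟩ := h
    exact ⟨max a m, le_max_right _ _, ha _ (le_max_left _ _)⟩
  choose F hF1 hF2 using key
  set P : ℕ → ℕ × Finset G := fun n => Nat.rec (⟨F ∅ 0, {g (F ∅ 0)}⟩ : ℕ × Finset G)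
    (fun _ Pk => ⟨F Pk.2 (Pk.1 + 1), insert (g (F Pk.2 (Pk.1 + 1))) Pk.2⟩) n with hPdef
  set N : ℕ → ℕ := fun n => (P n).1 with hNdef
  have hPsucc : ∀ k, P (k+1) =
      ⟨F (P k).2 ((P k).1 + 1), insert (g (F (P k).2 ((P k).1 + 1))) (P k).2⟩ :=
    fun k => rfl
  have hNsucc : ∀ k, N (k+1) = F (P k).2 ((P k).1 + 1) := fun k => rfl
  have hNmono : StrictMono N := by
    apply strictMono_nat_of_lt_succ
    intro k
    rw [hNsucc]
    exact lt_of_lt_of_le (Nat.lt_succ_self _) (hF1 _ _)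
  have hmem : ∀ k, ∀ j ≤ k, g (N j) ∈ (P k).2 := by
    intro k
    induction k with
    | zero =>
      intro j hj
      interval_cases j
      exact Finset.mem_singleton_self _
    | succ k ih =>
      intro j hj
      rcases Nat.le_succ_iff_eq_or_le.mp hj with h | h
      · rw [h, hNsucc]
        rw [hPsucc]
        exact Finset.mem_insert_self _ _
      · rw [hPsucc]
        exact Finset.mem_insert_of_mem (ih j h)
  have hginj : Function.Injective (g ∘ N) := by
    have hne : ∀ a b, a < b → g (N a) ≠ g (N b) := by
      intro a b hab heq
      obtain ⟨c, rfl⟩ := Nat.exists_eq_add_of_lt hab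
      have h1 : g (N (a + c + 1)) ∉ ((P (a + c)).2 : Set G) := by
        rw [hNsucc]
        exact hF2 _ _
      have h2 : g (N a) ∈ (P (a + c)).2 := hmem _ _ (Nat.le_add_right _ _)
      exact h1 (by rw [← heq]; exact_mod_cast h2)
    intro a b hab
    rcases lt_trichotomy a b with h | h | h
    · exact absurd hab (hne a b h)
    · exact h
    · exact absurd hab.symm (hne b a h)
  obtain ⟨φ, hφ, pp, hpp, pm, hpm, hdy⟩ := hdyn (g ∘ N) hginj
  have hpL : p ∉ L pm := hΩL pm hpm p hp
  obtain ⟨K, hKnhds, hKsub, hKcomp⟩ :=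
    local_compact_nhds ((hLclosed pm).isOpen_compl.mem_nhds hpL)
  have hKL : K ∩ L pm = ∅ := by
    rw [Set.eq_empty_iff_forall_notMem]
    rintro x ⟨hx1, hx2⟩
    exact hKsub hx1 hx2
  have hqΛ : q ∉ Λ := by
    intro hqΛ
    have : q ∈ Ω ∩ Λ := ⟨hq, hqΛ⟩
    rw [hΩΛ] at this
    exact this
  have hne : pp ≠ q := fun h => hqΛ (h ▸ hpp)
  obtain ⟨U, V, hU, hV, hppU, hqV, hUV⟩ := t2_separation hne
  have hps' : Filter.Tendsto (fun k => ps (N (φ k))) Filter.atTop (nhds p) :=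
    hps.comp ((hNmono.comp hφ).tendsto_atTop)
  have hconv' : Filter.Tendsto (fun k => g (N (φ k)) • ps (N (φ k))) Filter.atTop (nhds q) :=
    hconv.comp ((hNmono.comp hφ).tendsto_atTop)
  have e1 : ∀ᶠ k in Filter.atTop, ∀ x ∈ K, (g ∘ N) (φ k) • x ∈ U :=
    hdy K hKcomp hKL U (hU.mem_nhds hppU)
  have e2 : ∀ᶠ k in Filter.atTop, ps (N (φ k)) ∈ K := hps' hKnhds
  have e3 : ∀ᶠ k in Filter.atTop, g (N (φ k)) • ps (N (φ k)) ∈ V := hconv' (hV.mem_nhds hqV)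
  obtain ⟨k, ⟨h1, h2⟩, h3⟩ := ((e1.and e2).and e3).exists
  exact hUV.le_bot ⟨h1 _ h2, h3⟩
end

section
/- Let Λ_0 be a nonempty compact subset of S^{n-1}, f : Λ_0 → ℝ a 1-Lipschitz function with 1-Lipschitz extensions f^±, and Λ, Λ^+, Λ^- the graphs of f, f^+, f^- respectively. Then a point (x,t) of S^{n-1} × ℝ satisfies f^-(x) < t < f^+(x) if and only if (x,t) is in the chronological past of some point of Λ^+ \ Λ and in the chronological future of some point of Λ^- \ Λ: there exist x_0, x_1 ∈ S^{n-1} \ Λ_0 with d_0(x,x_0) < f^+(x_0) − t and d_0(x,x_1) < t − f^-(x_1). -/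
/-- With `Λ₀ ⊆ S^{n-1}` nonempty compact (the sphere with its geodesic
distance being modelled by an abstract metric space `S`), `f : Λ₀ → ℝ` 1-Lipschitz, and
`f⁺, f⁻` its standard 1-Lipschitz extensions with graphs `Λ⁺, Λ⁻` (the graph of `f` being
`Λ`), a point `(x,t)` satisfies `f⁻ x < t < f⁺ x` iff it is in the chronological past of
some point of `Λ⁺ \ Λ` and in the chronological future of some point of `Λ⁻ \ Λ`:
there are `x₀, x₁ ∉ Λ₀` with `d₀(x,x₀) < f⁺ x₀ - t` and `d₀(x,x₁) < t - f⁻ x₁`. -/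
theorem stmt_17 {S : Type*} [MetricSpace S]
    (Λ₀ : Set S) (hc : IsCompact Λ₀) (hne : Λ₀.Nonempty)
    (f : S → ℝ) (hf : ∀ x ∈ Λ₀, ∀ y ∈ Λ₀, |f x - f y| ≤ dist x y)
    (fp fm : S → ℝ)
    (hfp : ∀ x, fp x = sInf ((fun x₀ => f x₀ + dist x x₀) '' Λ₀))
    (hfm : ∀ x, fm x = sSup ((fun x₀ => f x₀ - dist x x₀) '' Λ₀)) :
    ∀ (x : S) (t : ℝ),
      (fm x < t ∧ t < fp x) ↔
        ((∃ x₀, x₀ ∉ Λ₀ ∧ dist x x₀ < fp x₀ - t) ∧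
         (∃ x₁, x₁ ∉ Λ₀ ∧ dist x x₁ < t - fm x₁)) := by
  obtain ⟨y, hy⟩ := hne
  have hbb : ∀ x : S, BddBelow ((fun x₀ => f x₀ + dist x x₀) '' Λ₀) := by
    intro x
    refine ⟨f y - dist x y, ?_⟩
    rintro _ ⟨z, hz, rfl⟩
    have h1 := (abs_le.1 (hf z hz y hy)).1
    have h2 : dist z y ≤ dist x z + dist x y := by
      rw [dist_comm x z]; exact dist_triangle z x y
    simp only
    linarith
  have hba : ∀ x : S, BddAbove ((fun x₀ => f x₀ - dist x x₀) '' Λ₀) := by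
    intro x
    refine ⟨f y + dist x y, ?_⟩
    rintro _ ⟨z, hz, rfl⟩
    have h1 := (abs_le.1 (hf z hz y hy)).2
    have h2 : dist z y ≤ dist x z + dist x y := by
      rw [dist_comm x z]; exact dist_triangle z x y
    simp only
    linarith
  have hnep : ∀ x : S, ((fun x₀ => f x₀ + dist x x₀) '' Λ₀).Nonempty :=
    fun x => ⟨_, ⟨y, hy, rfl⟩⟩
  have hnem : ∀ x : S, ((fun x₀ => f x₀ - dist x x₀) '' Λ₀).Nonempty :=
    fun x => ⟨_, ⟨y, hy, rfl⟩⟩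
  have hple : ∀ x : S, ∀ z ∈ Λ₀, fp x ≤ f z + dist x z := by
    intro x z hz
    rw [hfp x]
    exact csInf_le (hbb x) ⟨z, hz, rfl⟩
  have hmge : ∀ x : S, ∀ z ∈ Λ₀, f z - dist x z ≤ fm x := by
    intro x z hz
    rw [hfm x]
    exact le_csSup (hba x) ⟨z, hz, rfl⟩
  intro x t
  constructor
  · rintro ⟨hm, hp⟩
    have hx : x ∉ Λ₀ := by
      intro hx
      have h1 := hple x x hx
      have h2 := hmge x x hx
      simp [dist_self] at h1 h2
      linarith
    exact ⟨⟨x, hx, by simp; linarith⟩, ⟨x, hx, by simp; linarith⟩⟩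
  · rintro ⟨⟨x₀, hx₀, h0⟩, ⟨x₁, hx₁, h1⟩⟩
    constructor
    · -- fm x ≤ fm x₁ + dist x x₁ < t
      have : fm x ≤ fm x₁ + dist x x₁ := by
        rw [hfm x]
        refine csSup_le (hnem x) ?_
        rintro _ ⟨z, hz, rfl⟩
        have hd : dist x₁ z ≤ dist x₁ x + dist x z := dist_triangle x₁ x z
        have := hmge x₁ z hz
        simp only
        rw [dist_comm x₁ x] at hd
        linarith
      linarith
    · -- fp x ≥ fp x₀ - dist x x₀ > t
      have : fp x₀ - dist x x₀ ≤ fp x := by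
        rw [hfp x]
        refine le_csInf (hnep x) ?_
        rintro _ ⟨z, hz, rfl⟩
        have hd : dist x₀ z ≤ dist x₀ x + dist x z := dist_triangle x₀ x z
        have := hple x₀ z hz
        simp only
        rw [dist_comm x₀ x] at hd
        linarith
      linarith
end

section
/- Let Λ ⊂ S^{n-1} × ℝ be the graph of a 1-Lipschitz function f : Λ_0 → ℝ on a nonempty compact Λ_0 ⊆ S^{n-1}, and let Ω(Λ) = {(x,t) : f^-(x) < t < f^+(x)} be its invisible domain. Then Ω(Λ) is causally convex in S^{n-1} × ℝ: if (x,t), (x',t') ∈ Ω(Λ) and (y,s) lies on a causal curve from (x,t) to (x',t') (so that d_0(x,y) ≤ s − t and d_0(y,x') ≤ t' − s with t ≤ s ≤ t'), then (y,s) ∈ Ω(Λ). -/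
/-- Let `Λ` be the graph of a 1-Lipschitz function `f` on a nonempty
compact `Λ₀ ⊆ S^{n-1}` (the sphere modelled by an abstract metric space `S`), and let
`Ω(Λ) = {(x,t) : f⁻ x < t < f⁺ x}` be its invisible domain. Then `Ω(Λ)` is causally
convex in `S^{n-1} × ℝ`: if `(x,t), (x',t') ∈ Ω(Λ)` and `(y,s)` lies on a causal curve
from `(x,t)` to `(x',t')` (i.e. `d₀(x,y) ≤ s - t` and `d₀(y,x') ≤ t' - s`),
then `(y,s) ∈ Ω(Λ)`. -/
theorem stmt_18 {S : Type*} [MetricSpace S]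
    (Λ₀ : Set S) (hc : IsCompact Λ₀) (hne : Λ₀.Nonempty)
    (f : S → ℝ) (hf : ∀ x ∈ Λ₀, ∀ y ∈ Λ₀, |f x - f y| ≤ dist x y)
    (fp fm : S → ℝ)
    (hfp : ∀ x, fp x = sInf ((fun x₀ => f x₀ + dist x x₀) '' Λ₀))
    (hfm : ∀ x, fm x = sSup ((fun x₀ => f x₀ - dist x x₀) '' Λ₀)) :
    ∀ (x x' y : S) (t t' s : ℝ),
      fm x < t → t < fp x → fm x' < t' → t' < fp x' →
      dist x y ≤ s - t → dist y x' ≤ t' - s →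
      fm y < s ∧ s < fp y := by
  intro x x' y t t' s hmx hpx hmx' hpx' h1 h2
  obtain ⟨a, ha⟩ := hne
  have hbdd : ∀ z : S, BddAbove ((fun x₀ => f x₀ - dist z x₀) '' Λ₀) := by
    intro z
    refine ⟨f a + dist z a, ?_⟩
    rintro _ ⟨b, hb, rfl⟩
    have h3 := hf b hb a ha
    have h4 := abs_le.mp h3
    have h5 := dist_triangle b z a
    have h6 : dist b z = dist z b := dist_comm b z
    have h7 : dist b a = dist a b := dist_comm b a
    simp only
    linarith [h4.2]
  constructor
  · -- fm y < s
    have key : fm y ≤ fm x + dist x y := by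
      rw [hfm y]
      apply csSup_le (Set.Nonempty.image _ ⟨a, ha⟩)
      rintro _ ⟨x₀, hx₀, rfl⟩
      have h3 : f x₀ - dist x x₀ ≤ fm x := by
        rw [hfm x]
        exact le_csSup (hbdd x) ⟨x₀, hx₀, rfl⟩
      have htri := dist_triangle x y x₀
      simp only
      linarith
    linarith
  · -- s < fp y
    have hbddb : BddBelow ((fun x₀ => f x₀ + dist x' x₀) '' Λ₀) := by
      refine ⟨f a - dist x' a, ?_⟩
      rintro _ ⟨b, hb, rfl⟩
      have h3 := abs_le.mp (hf b hb a ha)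
      have h5 := dist_triangle b x' a
      have h7 : dist b x' = dist x' b := dist_comm b x'
      simp only
      linarith [h3.1]
    have key : fp x' - dist y x' ≤ fp y := by
      rw [hfp y]
      apply le_csInf (Set.Nonempty.image _ ⟨a, ha⟩)
      rintro _ ⟨x₀, hx₀, rfl⟩
      have h3 : fp x' ≤ f x₀ + dist x' x₀ := by
        rw [hfp x']
        exact csInf_le hbddb ⟨x₀, hx₀, rfl⟩
      have htri := dist_triangle x' y x₀
      have h6 : dist x' y = dist y x' := dist_comm x' y
      simp only
      linarith
    linarith
end

section
/- Every inextensible lightlike geodesic of S^{n-1} × ℝ (a curve t ↦ (x(t), t) with x a unit-speed geodesic of S^{n-1} defined for all t ∈ ℝ) meets the invisible domain Ω(Λ) of the graph Λ of a 1-Lipschitz function f on a nonempty compact Λ_0 ⊆ S^{n-1}, provided it avoids Λ and Λ is acausal; moreover the intersection with Ω(Λ) is an interval (connected). -/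
/-- Projection of a closed condition over a compact parameter set is closed. -/
lemma stmt19_aux {S : Type*} [MetricSpace S] {K : Set S} (hc : IsCompact K)
    (F : ℝ → S → ℝ) (hF : Continuous fun p : ℝ × K => F p.1 p.2) :
    IsClosed {t : ℝ | ∃ a ∈ K, F t a ≤ 0} := by
  have : CompactSpace K := isCompact_iff_compactSpace.mp hc
  have h1 : IsClosed {p : ℝ × K | F p.1 p.2 ≤ 0} :=
    isClosed_le hF continuous_const
  have h2 := isClosedMap_fst_of_compactSpace (X := ℝ) (Y := K) _ h1
  convert h2 using 1
  ext t
  constructor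
  · rintro ⟨a, ha, hle⟩
    exact ⟨(t, ⟨a, ha⟩), hle, rfl⟩
  · rintro ⟨⟨s, a⟩, hle, rfl⟩
    exact ⟨a, a.2, hle⟩

/-- Every inextensible lightlike geodesic `t ↦ (x t, t)` of
`S^{n-1} × ℝ` (with `x` a unit-speed geodesic of the sphere, so that locally
`d₀(x s, x t) = |s - t|` and globally `d₀(x s, x t) ≤ |s - t|`) which avoids the graph
`Λ` of a 1-Lipschitz function `f` on a nonempty compact `Λ₀ ⊆ S^{n-1}` meets the
invisible domain `Ω(Λ)` (the complement of `J⁺(Λ) ∪ J⁻(Λ)`), provided `Λ` is acausal;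
moreover the set of times at which it lies in `Ω(Λ)` is an interval (order-connected). -/
theorem stmt_19 {S : Type*} [MetricSpace S]
    (Λ₀ : Set S) (hc : IsCompact Λ₀) (hne : Λ₀.Nonempty)
    (f : S → ℝ) (hf : ∀ x ∈ Λ₀, ∀ y ∈ Λ₀, |f x - f y| ≤ dist x y)
    (hacausal : ∀ x ∈ Λ₀, ∀ y ∈ Λ₀, x ≠ y → |f x - f y| < dist x y)
    (x : ℝ → S)
    (hlight : ∀ s t : ℝ, |s - t| ≤ Real.pi → dist (x s) (x t) = |s - t|)
    (hcausal : ∀ s t : ℝ, dist (x s) (x t) ≤ |s - t|)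
    (havoid : ∀ t : ℝ, ¬ (x t ∈ Λ₀ ∧ f (x t) = t)) :
    (∃ t : ℝ, (¬ ∃ x₀ ∈ Λ₀, dist (x t) x₀ ≤ t - f x₀) ∧
              (¬ ∃ x₀ ∈ Λ₀, dist (x t) x₀ ≤ f x₀ - t)) ∧
    Set.OrdConnected {t : ℝ | (¬ ∃ x₀ ∈ Λ₀, dist (x t) x₀ ≤ t - f x₀) ∧
                              (¬ ∃ x₀ ∈ Λ₀, dist (x t) x₀ ≤ f x₀ - t)} := by
  set A : Set ℝ := {t | ∃ x₀ ∈ Λ₀, dist (x t) x₀ ≤ t - f x₀} with hA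
  set B : Set ℝ := {t | ∃ x₀ ∈ Λ₀, dist (x t) x₀ ≤ f x₀ - t} with hB
  -- x is continuous
  have hxlip : LipschitzWith 1 x := by
    apply LipschitzWith.of_dist_le_mul
    intro s t
    simpa [Real.dist_eq] using hcausal s t
  have hxcont : Continuous x := hxlip.continuous
  -- f is continuous on Λ₀
  have hflip : LipschitzOnWith 1 f Λ₀ := by
    rw [lipschitzOnWith_iff_dist_le_mul]
    intro a ha b hb
    simpa [Real.dist_eq] using hf a ha b hb
  have hfcont : ContinuousOn f Λ₀ := hflip.continuousOn
  have hfK : Continuous fun a : Λ₀ => f a :=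
    continuousOn_iff_continuous_restrict.mp hfcont
  -- A and B are closed
  have hd : Continuous fun p : ℝ × Λ₀ => dist (x p.1) (p.2 : S) :=
    (hxcont.comp continuous_fst).dist (continuous_subtype_val.comp continuous_snd)
  have hfs : Continuous fun p : ℝ × Λ₀ => f p.2 := hfK.comp continuous_snd
  have hAclosed : IsClosed A := by
    have := stmt19_aux hc (fun t a => dist (x t) a + f a - t)
      ((hd.add hfs).sub continuous_fst)
    convert this using 1
    ext t
    simp only [hA, Set.mem_setOf_eq]
    constructor
    · rintro ⟨a, ha, h⟩; exact ⟨a, ha, by linarith⟩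
    · rintro ⟨a, ha, h⟩; exact ⟨a, ha, by linarith⟩
  have hBclosed : IsClosed B := by
    have := stmt19_aux hc (fun t a => dist (x t) a - f a + t)
      ((hd.sub hfs).add continuous_fst)
    convert this using 1
    ext t
    simp only [hB, Set.mem_setOf_eq]
    constructor
    · rintro ⟨a, ha, h⟩; exact ⟨a, ha, by linarith⟩
    · rintro ⟨a, ha, h⟩; exact ⟨a, ha, by linarith⟩
  -- monotonicity
  have hAmono : ∀ s t : ℝ, s ≤ t → s ∈ A → t ∈ A := by
    rintro s t hst ⟨a, ha, h⟩
    refine ⟨a, ha, ?_⟩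
    calc dist (x t) a ≤ dist (x t) (x s) + dist (x s) a := dist_triangle _ _ _
      _ ≤ |t - s| + (s - f a) := add_le_add (hcausal t s) h
      _ = t - f a := by rw [abs_of_nonneg (by linarith)]; ring
  have hBmono : ∀ s t : ℝ, t ≤ s → s ∈ B → t ∈ B := by
    rintro s t hst ⟨a, ha, h⟩
    refine ⟨a, ha, ?_⟩
    calc dist (x t) a ≤ dist (x t) (x s) + dist (x s) a := dist_triangle _ _ _
      _ ≤ |t - s| + (f a - s) := add_le_add (hcausal t s) h
      _ = f a - t := by rw [abs_of_nonpos (by linarith)]; ring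
  -- A and B are disjoint
  have hdisj : ∀ t : ℝ, ¬(t ∈ A ∧ t ∈ B) := by
    rintro t ⟨⟨a, ha, hA'⟩, ⟨b, hb, hB'⟩⟩
    have hab : dist a b ≤ f b - f a :=
      calc dist a b ≤ dist (x t) a + dist (x t) b := by
            rw [dist_comm (x t) a]; exact dist_triangle _ _ _
        _ ≤ (t - f a) + (f b - t) := add_le_add hA' hB'
        _ = f b - f a := by ring
    have habs : |f a - f b| ≤ dist a b := hf a ha b hb
    by_cases hne' : a = b
    · subst hne'
      have h0 : dist (x t) a = 0 := le_antisymm (by linarith) dist_nonneg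
      have hxa : x t = a := by rwa [dist_eq_zero] at h0
      rw [h0] at hA' hB'
      exact havoid t ⟨hxa ▸ ha, by rw [hxa]; linarith⟩
    · have := hacausal a ha b hb hne'
      have : f b - f a ≤ |f a - f b| := by
        rw [abs_sub_comm]; exact le_abs_self _
      linarith [hacausal a ha b hb hne']
  -- bounds: f attains min and max on Λ₀
  obtain ⟨xm, hxm, hmin⟩ := hc.exists_isMinOn hne hfcont
  obtain ⟨xM, hxM, hmax⟩ := hc.exists_isMaxOn hne hfcont
  have hnotA : (f xm - 1) ∉ A := by
    rintro ⟨a, ha, h⟩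
    have := hmin ha
    have := dist_nonneg (x := x (f xm - 1)) (y := a)
    simp only [isMinOn_iff] at hmin
    have := hmin a ha
    linarith
  have hnotB : (f xM + 1) ∉ B := by
    rintro ⟨a, ha, h⟩
    have := dist_nonneg (x := x (f xM + 1)) (y := a)
    simp only [isMaxOn_iff] at hmax
    have := hmax a ha
    linarith
  constructor
  · -- existence
    by_contra hno
    push_neg at hno
    have hcover : (Set.univ : Set ℝ) ⊆ A ∪ B := by
      intro t _
      by_cases hta : t ∈ A
      · exact Or.inl hta
      · have hta' : ¬ ∃ x₀ ∈ Λ₀, dist (x t) x₀ ≤ t - f x₀ := hta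
        push_neg at hta'
        exact Or.inr (hno t hta')
    have hAne : (Set.univ ∩ A).Nonempty := by
      refine ⟨f xM + 1, Set.mem_univ _, ?_⟩
      rcases hcover (Set.mem_univ (f xM + 1)) with h | h
      · exact h
      · exact absurd h hnotB
    have hBne : (Set.univ ∩ B).Nonempty := by
      refine ⟨f xm - 1, Set.mem_univ _, ?_⟩
      rcases hcover (Set.mem_univ (f xm - 1)) with h | h
      · exact absurd h hnotA
      · exact h
    obtain ⟨t, -, htA, htB⟩ :=
      (isPreconnected_closed_iff.mp isPreconnected_univ) A B hAclosed hBclosed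
        hcover hAne hBne
    exact hdisj t ⟨htA, htB⟩
  · -- order-connectedness
    constructor
    rintro t1 ⟨h1A, h1B⟩ t2 ⟨h2A, h2B⟩ t ⟨ht1, ht2⟩
    exact ⟨fun h => h2A (hAmono t t2 ht2 h), fun h => h1B (hBmono t t1 ht1 h)⟩
end
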